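/- Let H be any 3-uniform hypergraph with vertex set ℕ. Then the map φ : i ↦ A^i is an embedding of H into the hypergraph G; that is, φ is injective and, for all i < j < k in ℕ, {i, j, k} is a hyperedge of H if and only if {A^i, A^j, A^k} is a hyperedge of G. -/

import Mathlib

open scoped Classical

section AbstractTrees

variable {α : Type*} [PartialOrder α]

/-- The set of strict predecessors of `t` inside `U`. -/
def predsIn (U : Set α) (t : α) : Set α := {s ∈ U | s < t}

/-- The level of a node `t` in the tree `U`: the number of its strict predecessors in `U`. -/
noncomputable def levelIn (U : Set α) (t : α) : ℕ := (predsIn U t).ncard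

/-- `U` is a tree: the set of strict predecessors of every node is finite and
linearly ordered. -/
def IsTreeOn (U : Set α) : Prop :=
  ∀ t ∈ U, (predsIn U t).Finite ∧
    ∀ s₁ ∈ predsIn U t, ∀ s₂ ∈ predsIn U t, s₁ ≤ s₂ ∨ s₂ ≤ s₁

/-- The height of the tree `U`: the least `n` such that `U` has no node of level `n`
(equivalently, for trees, the supremum of `level + 1`), or `ω = ⊤` if there is no such `n`. -/
noncomputable def heightIn (U : Set α) : ℕ∞ :=
  ⨆ t ∈ U, ((levelIn U t : ℕ∞) + 1)

/-- The level set `L_U(D)` of `D` in `U`. -/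
def levelSetIn (U D : Set α) : Set ℕ := levelIn U '' D

/-- `t` is a maximal node of `U`. -/
def IsMaximalIn (U : Set α) (t : α) : Prop := t ∈ U ∧ ∀ s ∈ U, ¬ t < s

/-- `U` is rooted: it has a unique minimal element below all of its nodes. -/
def IsRootedIn (U : Set α) : Prop := ∃ r ∈ U, ∀ t ∈ U, r ≤ t

/-- `U` is balanced: either it has infinite height and no maximal nodes, or all its
maximal nodes lie on level `h(U) - 1`. -/
def IsBalanced (U : Set α) : Prop :=
  (heightIn U = ⊤ ∧ ∀ t, ¬ IsMaximalIn U t) ∨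
  (heightIn U ≠ ⊤ ∧ ∀ t, IsMaximalIn U t → ((levelIn U t : ℕ∞) + 1 = heightIn U))

/-- `m` is the meet `s ∧_U t` of `s` and `t` in `U`. -/
def IsMeetIn (U : Set α) (s t m : α) : Prop :=
  m ∈ U ∧ m ≤ s ∧ m ≤ t ∧ ∀ m' ∈ U, m' ≤ s → m' ≤ t → m' ≤ m

/-- `S` is a subtree of `U`: a subset closed under binary meets (taken in `U`). -/
def IsSubtreeOf (U S : Set α) : Prop :=
  S ⊆ U ∧ ∀ s ∈ S, ∀ t ∈ S, ∃ m ∈ S, IsMeetIn U s t m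

/-- `t` is an immediate successor of `s` in `U`. -/
def IsImmSuccIn (U : Set α) (s t : α) : Prop :=
  s ∈ U ∧ t ∈ U ∧ s < t ∧ ∀ u ∈ U, s < u → ¬ u < t

/-- `U` is finitely branching. -/
def IsFinBranching (U : Set α) : Prop :=
  ∀ t ∈ U, {s | IsImmSuccIn U t s}.Finite

/-- `S` is a strong subtree of `U`: it is a subtree which is either empty, or is
rooted, balanced, has each of its levels contained in a single level of `U`, and for every
non-maximal node `s ∈ S` and every immediate successor `t` of `s` in `U` there is exactly
one immediate successor of `s` in `S` above `t`. -/
def IsStrongSubtreeOf (U S : Set α) : Prop :=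
  IsSubtreeOf U S ∧
  (S = ∅ ∨
    (IsRootedIn S ∧ IsBalanced S ∧
      (∀ s ∈ S, ∀ t ∈ S, levelIn S s = levelIn S t → levelIn U s = levelIn U t) ∧
      (∀ s ∈ S, ¬ IsMaximalIn S s → ∀ t, IsImmSuccIn U s t →
        ∃! c, IsImmSuccIn S s c ∧ t ≤ c)))

end AbstractTrees

/-- A finite `{0,1}`-vector: a function `len → Bool`, represented with total entry
function which vanishes from index `len` on. Nodes of the tree `T₁`. -/
structure Vec where
  len : ℕ
  entry : ℕ → Bool
  outside : ∀ i, len ≤ i → entry i = false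

/-- A finite strictly lower triangular square `{0,1}`-matrix: a function
`size × size → Bool` with `entry i j = 0` for `i ≤ j`, represented with a total entry
function which vanishes outside. Nodes of the tree `T₂`. -/
structure Mat where
  size : ℕ
  entry : ℕ → ℕ → Bool
  lower : ∀ i j, i ≤ j → entry i j = false
  outside : ∀ i j, size ≤ i → entry i j = false

/-- The tree order on `T₁`: end-extension of finite `{0,1}`-vectors. -/
instance : PartialOrder Vec where
  le u v := u.len ≤ v.len ∧ ∀ i, i < u.len → u.entry i = v.entry i
  le_refl u := ⟨le_rfl, fun _ _ => rfl⟩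
  le_trans u v w h h' :=
    ⟨h.1.trans h'.1, fun i hi => (h.2 i hi).trans (h'.2 i (lt_of_lt_of_le hi h.1))⟩
  le_antisymm u v h h' := by
    have hl : u.len = v.len := le_antisymm h.1 h'.1
    have he : u.entry = v.entry := by
      funext i
      by_cases hi : i < u.len
      · exact h.2 i hi
      · rw [u.outside i (le_of_not_gt hi), v.outside i (by omega)]
    cases u; cases v
    simp only at hl he
    subst hl; subst he; rfl

/-- The tree order on `T₂`: extension of strictly lower triangular `{0,1}`-matrices. -/
instance : PartialOrder Mat where
  le A B := A.size ≤ B.size ∧ ∀ i j, i < A.size → j < A.size → A.entry i j = B.entry i j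
  le_refl A := ⟨le_rfl, fun _ _ _ _ => rfl⟩
  le_trans A B C h h' :=
    ⟨h.1.trans h'.1, fun i j hi hj => (h.2 i j hi hj).trans
      (h'.2 i j (lt_of_lt_of_le hi h.1) (lt_of_lt_of_le hj h.1))⟩
  le_antisymm A B h h' := by
    have hl : A.size = B.size := le_antisymm h.1 h'.1
    have he : A.entry = B.entry := by
      funext i j
      by_cases hi : i < A.size
      · by_cases hj : j < A.size
        · exact h.2 i j hi hj
        · -- j ≥ A.size and i < A.size, so i < j and both entries vanish
          rw [A.lower i j (by omega), B.lower i j (by omega)]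
      · rw [A.outside i j (le_of_not_gt hi), B.outside i j (by omega)]
    cases A; cases B
    simp only at hl he
    subst hl; subst he; rfl

/-- The extension `A⌢v` of an `n × n` matrix `A` by a vector `v` of length `n`:
the `(n+1) × (n+1)` matrix extending `A` whose last row is `v` followed by `0` and whose
last column is zero. -/
def matExtend (A : Mat) (v : Vec) : Mat where
  size := A.size + 1
  entry := fun i j =>
    if i < A.size then A.entry i j
    else if i = A.size ∧ j < A.size then v.entry j else false
  lower := by
    intro i j hij
    by_cases h1 : i < A.size
    · simp only [if_pos h1]
      exact A.lower i j hij
    · show (if i < A.size then A.entry i j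
          else if i = A.size ∧ j < A.size then v.entry j else false) = false
      rw [if_neg h1, if_neg (by omega)]
  outside := by
    intro i j hi
    show (if i < A.size then A.entry i j
        else if i = A.size ∧ j < A.size then v.entry j else false) = false
    rw [if_neg (by omega), if_neg (by omega)]

/-- The `m`-th row of a matrix `A`, as a `{0,1}`-vector of length `|A|`. -/
def rowOf (A : Mat) (m : ℕ) : Vec where
  len := A.size
  entry := fun l => A.entry m l
  outside := by
    intro l hl
    rcases le_or_gt m l with h | h
    · exact A.lower m l h
    · exact A.outside m l (hl.trans h.le)
/-- A 3-uniform hypergraph on a vertex set `V`: a set of hyperedges, each a 3-element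
subset of `V`. -/
structure HGraph (V : Type*) where
  edges : Set (Finset V)
  card_eq : ∀ e ∈ edges, e.card = 3

/-- An embedding of 3-uniform hypergraphs: an injective map `f` between the vertex sets
such that `{x, y, z}` is a hyperedge if and only if `{f x, f y, f z}` is a hyperedge. -/
def IsHGEmbedding {V W : Type*} (A : HGraph V) (B : HGraph W) (f : V → W) : Prop :=
  Function.Injective f ∧
    ∀ x y z : V, ({x, y, z} : Finset V) ∈ A.edges ↔ ({f x, f y, f z} : Finset W) ∈ B.edges

/-- The 3-uniform hypergraph `G`: its vertices are the nodes of the tree `T₂`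
(i.e. finite strictly lower triangular `{0,1}`-matrices), and `{A, B, C}` is a hyperedge
if and only if `|A| < |B| < |C|` and `C_{|B|, |A|} = 1`. -/
noncomputable def Ghyp : HGraph Mat where
  edges := {e | ∃ A B C : Mat, e = {A, B, C} ∧
    A.size < B.size ∧ B.size < C.size ∧ C.entry B.size A.size = true}
  card_eq := by
    rintro e ⟨A, B, C, rfl, h1, h2, -⟩
    refine Finset.card_eq_three.mpr ⟨A, B, C, ?_, ?_, ?_, rfl⟩
    · exact fun h => absurd (congrArg Mat.size h) (by omega)
    · exact fun h => absurd (congrArg Mat.size h) (by omega)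
    · exact fun h => absurd (congrArg Mat.size h) (by omega)

/-- Given a 3-uniform hypergraph `H` on `ℕ`, the matrix `A^i` assigned to the vertex
`i`: the `(2i+1) × (2i+1)` strictly lower triangular `{0,1}`-matrix with
`A^i_{2k+1, 2j} = A^i_{2k+1, 2j+1} = 1` for every hyperedge `{j, k, i}` of `H` with
`j < k < i`, and all other entries `0`. -/
noncomputable def matOf (H : HGraph ℕ) (i : ℕ) : Mat where
  size := 2 * i + 1
  entry := fun r c =>
    if r % 2 = 1 ∧ c / 2 < r / 2 ∧ r / 2 < i ∧ ({c / 2, r / 2, i} : Finset ℕ) ∈ H.edges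
    then true else false
  lower := by
    intro r c hrc
    show (if r % 2 = 1 ∧ c / 2 < r / 2 ∧ r / 2 < i ∧ ({c / 2, r / 2, i} : Finset ℕ) ∈ H.edges
        then true else false) = false
    rw [if_neg]
    rintro ⟨h1, h2, h3, -⟩
    omega
  outside := by
    intro r c hr
    show (if r % 2 = 1 ∧ c / 2 < r / 2 ∧ r / 2 < i ∧ ({c / 2, r / 2, i} : Finset ℕ) ∈ H.edges
        then true else false) = false
    rw [if_neg]
    rintro ⟨h1, h2, h3, -⟩
    omega

/-- The valuation tree `val(S₁, S₂)` corresponding to a vector strong subtree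
`(S₁, S₂)` of `(T₁, T₂)`, as a predicate: the root of `S₂` belongs to it, and whenever
`A` belongs to it, `v ∈ S₁(|A|_{S₂})` and `{C} = ImmSucc_{S₂}(A) ∩ Succ_{T₂}(A⌢v)`,
then `C` belongs to it. -/
inductive InVal (S₁ : Set Vec) (S₂ : Set Mat) : Mat → Prop where
  | root (A : Mat) (hA : A ∈ S₂) (hroot : ∀ B ∈ S₂, A ≤ B) : InVal S₁ S₂ A
  | step (A : Mat) (v : Vec) (C : Mat) (hA : InVal S₁ S₂ A) (hv : v ∈ S₁)
      (hlev : levelIn S₁ v = levelIn S₂ A)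
      (hC : IsImmSuccIn S₂ A C ∧ matExtend A v ≤ C)
      (huniq : ∀ C' : Mat, IsImmSuccIn S₂ A C' ∧ matExtend A v ≤ C' → C' = C) :
      InVal S₁ S₂ C

/-- `(S₁, S₂)` is a vector strong subtree of the vector tree `(T₁, T₂)`:
both coordinates are strong subtrees of the respective (ambient) trees and the pair is
level compatible, i.e. `L_{T₁}(S₁) = L_{T₂}(S₂)`. -/
def IsVecStrongPair (S₁ : Set Vec) (S₂ : Set Mat) : Prop :=
  IsStrongSubtreeOf Set.univ S₁ ∧ IsStrongSubtreeOf Set.univ S₂ ∧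
    levelSetIn Set.univ S₁ = levelSetIn Set.univ S₂

/-- A subset of `T₂` is a valuation tree if it equals `val(S₁, S₂)` for some vector
strong subtree `(S₁, S₂)` of `(T₁, T₂)`. -/
def IsValTree (T : Set Mat) : Prop :=
  ∃ S₁ S₂, IsVecStrongPair S₁ S₂ ∧ T = {C | InVal S₁ S₂ C}

/-- A structural isomorphism between subtrees `T` and `T'` of `T₂`: an isomorphism of
trees preserving relative heights of nodes such that, for all `A, B, C ∈ T` with
`|A| ≤ |B| < |C|`, one has `f(C)_{|f(B)|, |f(A)|} = C_{|B|, |A|}`. -/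
structure IsStructIso (T T' : Set Mat) (f : Mat → Mat) : Prop where
  mapsTo : ∀ A ∈ T, f A ∈ T'
  injOn : ∀ A ∈ T, ∀ B ∈ T, f A = f B → A = B
  surjOn : ∀ C ∈ T', ∃ A ∈ T, f A = C
  orderIso : ∀ A ∈ T, ∀ B ∈ T, (A ≤ B ↔ f A ≤ f B)
  levelEq : ∀ A ∈ T, levelIn T A = levelIn T' (f A)
  passing : ∀ A ∈ T, ∀ B ∈ T, ∀ C ∈ T, A.size ≤ B.size → B.size < C.size →
    (f C).entry (f B).size (f A).size = C.entry B.size A.size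

/-!
Since `|A^i| = 2i + 1`, the sizes of `A^i, A^j, A^k` increase with `i < j < k`, so the only
way to read `{A^i, A^j, A^k}` as a hyperedge `{A, B, C}` of `G` is `A = A^i, B = A^j, C = A^k`,
and the condition there is `A^k_{2j+1, 2i+1} = 1`, which by construction holds exactly when
`{i, j, k}` is a hyperedge of `H`.
-/

theorem eq_of_triple_subset_of_key_lt {α β : Type*} [DecidableEq α] [LinearOrder β]
    (key : α → β) {a b c a' b' c' : α}
    (hab : key a < key b) (hbc : key b < key c)
    (hab' : key a' < key b') (hbc' : key b' < key c')
    (h : ({a', b', c'} : Finset α) ⊆ {a, b, c}) :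
    a' = a ∧ b' = b ∧ c' = c := by
  simp only [Finset.insert_subset_iff, Finset.singleton_subset_iff, Finset.mem_insert,
    Finset.mem_singleton] at h
  obtain ⟨ha, hb, hc⟩ := h
  -- the only strictly key-increasing assignment of `a', b', c'` to `a, b, c` is the identity
  rcases ha with rfl | rfl | rfl <;> rcases hb with rfl | rfl | rfl <;>
    rcases hc with rfl | rfl | rfl <;> first | exact ⟨rfl, rfl, rfl⟩ | order

theorem mem_Ghyp_edges_iff {A B C : Mat} (hAB : A.size < B.size) (hBC : B.size < C.size) :
    ({A, B, C} : Finset Mat) ∈ Ghyp.edges ↔ C.entry B.size A.size = true := by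
  constructor
  · rintro ⟨A', B', C', heq, hAB', hBC', hentry⟩
    obtain ⟨rfl, rfl, rfl⟩ :=
      eq_of_triple_subset_of_key_lt Mat.size hAB hBC hAB' hBC' heq.symm.subset
    exact hentry
  · exact fun hentry => ⟨A, B, C, rfl, hAB, hBC, hentry⟩

section MatOf

variable (H : HGraph ℕ)

@[simp]
theorem matOf_size (i : ℕ) : (matOf H i).size = 2 * i + 1 := rfl

theorem matOf_injective : Function.Injective (matOf H) := fun a b h => by
  have := congrArg Mat.size h
  simp only [matOf_size] at this
  omega

theorem matOf_entry_odd_odd (i j k : ℕ) :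
    (matOf H k).entry (2 * j + 1) (2 * i + 1) = true ↔
      i < j ∧ j < k ∧ ({i, j, k} : Finset ℕ) ∈ H.edges := by
  have hi : (2 * i + 1) / 2 = i := by omega
  have hj : (2 * j + 1) / 2 = j := by omega
  simp [matOf, hi, hj]

end MatOf

/-- For every 3-uniform hypergraph `H` on `ℕ`, the map `φ : i ↦ A^i` is an embedding of
`H` into the hypergraph `G`: it is injective and, for all `i < j < k`, `{i, j, k}` is a
hyperedge of `H` if and only if `{A^i, A^j, A^k}` is a hyperedge of `G`. -/
theorem matOf_is_embedding (H : HGraph ℕ) :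
    Function.Injective (matOf H) ∧
    ∀ i j k : ℕ, i < j → j < k →
      (({i, j, k} : Finset ℕ) ∈ H.edges ↔
        ({matOf H i, matOf H j, matOf H k} : Finset Mat) ∈ Ghyp.edges) := by
  refine ⟨matOf_injective H, fun i j k hij hjk => ?_⟩
  rw [mem_Ghyp_edges_iff (by simpa using hij) (by simpa using hjk), matOf_size, matOf_size,
    matOf_entry_odd_odd]
  exact ⟨fun hedge => ⟨hij, hjk, hedge⟩, fun h => h.2.2⟩
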